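/- arXiv:1602.01028 — 2 statements merged into one kernel-verified Lean document; each statement's English description precedes it below -/
import Mathlib

section
/- Suppose a finite transition system (Q, Σ, δ) simulates a continuous system F : X × U × D → X via a partition map P : Q → 2^X, meaning: the sets P(q) partition X, and for all x ∈ X, u ∈ U, d ∈ D, if x ∈ P(q) and F(x, u, d) ∈ P(q′), then q′ ∈ δ(q, u). If Q^I ⊆ Q is a controlled invariant set of the finite system (i.e., for every q ∈ Q^I there exists u ∈ Σ with δ(q, u) ⊆ Q^I), then the set Ĩ = ⋃_{q ∈ Q^I} P(q) is a robust controlled invariant set of the continuous system: for every x ∈ Ĩ there exists u ∈ U such that F(x, u, d) ∈ Ĩ for all d ∈ D. -/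
def RobustControlledInvariant {Z V W : Type*} (f : Z → V → W → Z) (C : Set Z) : Prop :=
  ∀ z ∈ C, ∃ v : V, ∀ w : W, f z v w ∈ C

theorem mem_biUnion_succ_of_simulates {X U D Q : Type*} {F : X → U → D → X} {P : Q → Set X}
    {δ : Q → U → Set Q} (hcover : (⋃ q : Q, P q) = Set.univ)
    (hsim : ∀ (x : X) (u : U) (d : D) (q q' : Q), x ∈ P q → F x u d ∈ P q' → q' ∈ δ q u)
    {x : X} {q : Q} (hx : x ∈ P q) (u : U) (d : D) :
    F x u d ∈ ⋃ q' ∈ δ q u, P q' := by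
  obtain ⟨q', hq'⟩ := Set.mem_iUnion.mp (hcover ▸ Set.mem_univ (F x u d))
  exact Set.mem_biUnion (hsim x u d q q' hx hq') hq'

theorem abstraction_invariant_concretization_general {X U D Q : Type*}
    (F : X → U → D → X) (P : Q → Set X) (δ : Q → U → Set Q)
    (hcover : (⋃ q : Q, P q) = Set.univ)
    (hsim : ∀ (x : X) (u : U) (d : D) (q q' : Q),
      x ∈ P q → F x u d ∈ P q' → q' ∈ δ q u)
    (QI : Set Q) (hQI : ∀ q ∈ QI, ∃ u : U, δ q u ⊆ QI) :
    RobustControlledInvariant F (⋃ q ∈ QI, P q) := by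
  intro x hx
  obtain ⟨q, hq, hxq⟩ := Set.mem_iUnion₂.mp hx
  obtain ⟨u, hu⟩ := hQI q hq
  exact ⟨u, fun d => Set.biUnion_subset_biUnion_left hu
    (mem_biUnion_succ_of_simulates hcover hsim hxq u d)⟩

theorem abstraction_invariant_concretization {X U D Q : Type*} [Finite Q] [Finite U]
    (F : X → U → D → X) (P : Q → Set X) (δ : Q → U → Set Q)
    (hcover : (⋃ q : Q, P q) = Set.univ)
    (hdisj : ∀ qa qb : Q, qa ≠ qb → P qa ∩ P qb = ∅)
    (hsim : ∀ (x : X) (u : U) (d : D) (q q' : Q),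
      x ∈ P q → F x u d ∈ P q' → q' ∈ δ q u)
    (QI : Set Q) (hQI : ∀ q ∈ QI, ∃ u : U, δ q u ⊆ QI) :
    RobustControlledInvariant F (⋃ q ∈ QI, P q) :=
  abstraction_invariant_concretization_general F P δ hcover hsim QI hQI
end

section
/- Under the simulation relation between a finite abstraction and a continuous system, if the abstract maximal controlled invariant set Q^I inside the safe abstract states satisfies the invariance condition, then its concretization Ĩ = ⋃_{q ∈ Q^I} P(q) is contained in the maximal robust controlled invariant set I of the continuous system inside S. -/
open Set

theorem robustControlledInvariant_biUnion_of_simulation {X U D Q : Type*}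
    {F : X → U → D → X} {P : Q → Set X} {δ : Q → U → Set Q}
    (hcover : (⋃ q : Q, P q) = univ)
    (hsim : ∀ (x : X) (u : U) (d : D) (q q' : Q), x ∈ P q → F x u d ∈ P q' → q' ∈ δ q u)
    {QI : Set Q} (hQI : ∀ q ∈ QI, ∃ u : U, δ q u ⊆ QI) :
    RobustControlledInvariant F (⋃ q ∈ QI, P q) := by
  intro x hx
  obtain ⟨q, hq, hxq⟩ := mem_iUnion₂.mp hx
  obtain ⟨u, hu⟩ := hQI q hq
  refine ⟨u, fun d => ?_⟩
  obtain ⟨q', hq'⟩ := mem_iUnion.mp (hcover ▸ mem_univ (F x u d))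
  exact mem_iUnion₂.mpr ⟨q', hu (hsim x u d q q' hxq hq'), hq'⟩

theorem concretization_subset_maximal_general {X U D Q : Type*}
    (F : X → U → D → X) (P : Q → Set X) (δ : Q → U → Set Q)
    (hcover : (⋃ q : Q, P q) = Set.univ)
    (hsim : ∀ (x : X) (u : U) (d : D) (q q' : Q),
      x ∈ P q → F x u d ∈ P q' → q' ∈ δ q u)
    (QS : Set Q) (S : Set X) (hS : S = ⋃ q ∈ QS, P q)
    (QI : Set Q) (hQIS : QI ⊆ QS) (hQI : ∀ q ∈ QI, ∃ u : U, δ q u ⊆ QI) :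
    (⋃ q ∈ QI, P q) ⊆
      ⋃₀ {C : Set X | RobustControlledInvariant F C ∧ C ⊆ S} :=
  subset_sUnion_of_mem
    ⟨robustControlledInvariant_biUnion_of_simulation hcover hsim hQI,
      hS ▸ biUnion_subset_biUnion_left hQIS⟩

theorem concretization_subset_maximal {X U D Q : Type*} [Finite Q] [Finite U]
    (F : X → U → D → X) (P : Q → Set X) (δ : Q → U → Set Q)
    (hcover : (⋃ q : Q, P q) = Set.univ)
    (hdisj : ∀ qa qb : Q, qa ≠ qb → P qa ∩ P qb = ∅)
    (hsim : ∀ (x : X) (u : U) (d : D) (q q' : Q),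
      x ∈ P q → F x u d ∈ P q' → q' ∈ δ q u)
    (QS : Set Q) (S : Set X) (hS : S = ⋃ q ∈ QS, P q)
    (QI : Set Q) (hQIS : QI ⊆ QS) (hQI : ∀ q ∈ QI, ∃ u : U, δ q u ⊆ QI) :
    (⋃ q ∈ QI, P q) ⊆
      ⋃₀ {C : Set X | RobustControlledInvariant F C ∧ C ⊆ S} :=
  concretization_subset_maximal_general F P δ hcover hsim QS S hS QI hQIS hQI
end
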